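/- Let S = {(x, y) ∈ [0,1]² : (x + 1/2)·y = 1/2 and (x − 1)·(y + 3/2) = −1}. Then S = {(1/2, 1/2)}, and conv(S) = conv(S_{(1,0)}) ∩ conv(S_{(0,1)}) ∩ conv(S_{(1,−1)}), where S_{(1,−1)} = {(x, y) ∈ [0,1]² : −(3/2)·x + (3/2)·y = 0}. -/

import Mathlib

/-!
The two constraints force `y = x` and then `(x - 1/2)(x + 1) = 0`, so `S` is the single point
`(1/2, 1/2)`. For the hulls: `S_{(1,0)}` and `S_{(0,1)}` are arcs of hyperbolas that are convex
over `[0,1]`, so each lies in the half-plane above its tangent line at `(1/2, 1/2)`; these two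
half-planes meet the line `x = y`, which contains `S_{(1,-1)}`, only in `(1/2, 1/2)`.
-/

open Set

/-- The box `[0,1]²`. -/
def unitSquare : Set (ℝ × ℝ) := {p | p.1 ∈ Icc (0:ℝ) 1 ∧ p.2 ∈ Icc (0:ℝ) 1}

/-- `g₁(x,y) = x·y + (1/2)·y − 1/2`, the first constraint in standard form. -/
noncomputable def g1 (p : ℝ × ℝ) : ℝ := p.1 * p.2 + (1/2) * p.2 - 1/2

/-- `g₂(x,y) = x·y + (3/2)·x − y − 1/2`, the second constraint in standard form. -/
noncomputable def g2 (p : ℝ × ℝ) : ℝ := p.1 * p.2 + (3/2) * p.1 - p.2 - 1/2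

/-- `S = {(x,y) ∈ [0,1]² : (x + 1/2)·y = 1/2, (x − 1)·(y + 3/2) = −1}`. -/
def setS : Set (ℝ × ℝ) :=
  {p ∈ unitSquare | (p.1 + 1/2) * p.2 = 1/2 ∧ (p.1 - 1) * (p.2 + 3/2) = -1}

/-- The aggregated set `S_λ` with weights `l = (λ₁, λ₂)`. -/
def setAgg (l : ℝ × ℝ) : Set (ℝ × ℝ) :=
  {p ∈ unitSquare | l.1 * g1 p + l.2 * g2 p = 0}

lemma isLinearMap_lincomb (a b : ℝ) : IsLinearMap ℝ (fun p : ℝ × ℝ => a * p.1 + b * p.2) where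
  map_add p q := by simp only [Prod.fst_add, Prod.snd_add]; ring
  map_smul c p := by simp only [Prod.smul_fst, Prod.smul_snd, smul_eq_mul]; ring

lemma setS_eq : setS = {((1/2 : ℝ), (1/2 : ℝ))} := by
  ext ⟨x, y⟩
  simp only [setS, unitSquare, mem_ofPred_eq, mem_singleton_iff, Prod.mk.injEq, mem_Icc]
  constructor
  · rintro ⟨⟨⟨hx0, -⟩, -⟩, h1, h2⟩
    obtain rfl : y = x := by linear_combination (2/3) * h1 - (2/3) * h2
    have hroots : (y - 1/2) * (y + 1) = 0 := by linear_combination h1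
    have hy : y = 1/2 := by
      rcases mul_eq_zero.1 hroots with h | h <;> linarith
    exact ⟨hy, hy⟩
  · rintro ⟨rfl, rfl⟩
    norm_num

lemma center_mem_setAgg (l : ℝ × ℝ) : ((1/2 : ℝ), (1/2 : ℝ)) ∈ setAgg l :=
  ⟨by norm_num [unitSquare], by norm_num [g1, g2]⟩

lemma setAgg_one_neg_one :
    setAgg (1, -1) = {p ∈ unitSquare | -(3/2) * p.1 + (3/2) * p.2 = 0} := by
  ext p
  simp only [setAgg, g1, g2, mem_ofPred_eq]
  constructor <;> exact fun ⟨hp, e⟩ => ⟨hp, by linear_combination e⟩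

/- Tangent line at `(1/2, 1/2)` to the convex arc `y = 1 / (2x + 1)`: indeed
`(x/2 + y - 3/4)(x + 1/2) = (x - 1/2)² / 2 + g₁(x, y)`. -/
lemma setAgg_one_zero_subset :
    setAgg (1, 0) ⊆ {p : ℝ × ℝ | 3/4 ≤ 1/2 * p.1 + 1 * p.2} := by
  rintro ⟨x, y⟩ ⟨⟨⟨hx0, -⟩, -⟩, he⟩
  have key : (1/2 * x + 1 * y - 3/4) * (x + 1/2) = (x - 1/2) ^ 2 / 2 := by
    simp only [g1, g2] at he
    linear_combination he
  have hprod : 0 ≤ (1/2 * x + 1 * y - 3/4) * (x + 1/2) := key ▸ by positivity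
  have := nonneg_of_mul_nonneg_left hprod (by linarith)
  simp only [mem_ofPred_eq]
  linarith

/- Tangent line at `(1/2, 1/2)` to the convex arc `y = (3x - 1) / (2(1 - x))`: indeed
`(4x - y - 3/2)(1 - x) = g₂(x, y) - (2x - 1)²`, and `x = 1` is excluded since `g₂(1, y) = 1`. -/
lemma setAgg_zero_one_subset :
    setAgg (0, 1) ⊆ {p : ℝ × ℝ | 4 * p.1 + (-1) * p.2 ≤ 3/2} := by
  rintro ⟨x, y⟩ ⟨⟨⟨-, hx1⟩, -⟩, he⟩
  simp only [g1, g2, zero_mul, one_mul, zero_add] at he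
  have hx : x ≠ 1 := by
    rintro rfl
    linarith
  have key : (4 * x + (-1) * y - 3/2) * (1 - x) = -(2 * x - 1) ^ 2 := by
    linear_combination he
  have hprod : (4 * x + (-1) * y - 3/2) * (1 - x) ≤ 0 := key ▸ neg_nonpos.2 (sq_nonneg _)
  have := nonpos_of_mul_nonpos_left hprod (sub_pos.2 (lt_of_le_of_ne hx1 hx))
  simp only [mem_ofPred_eq]
  linarith

theorem stmt15 :
    setS = {((1/2 : ℝ), (1/2 : ℝ))} ∧
    setAgg (1, -1) = {p ∈ unitSquare | -(3/2) * p.1 + (3/2) * p.2 = 0} ∧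
    convexHull ℝ setS =
      convexHull ℝ (setAgg (1, 0)) ∩ convexHull ℝ (setAgg (0, 1)) ∩
        convexHull ℝ (setAgg (1, -1)) := by
  refine ⟨setS_eq, setAgg_one_neg_one, ?_⟩
  rw [setS_eq, convexHull_singleton]
  refine Subset.antisymm ?_ ?_
  · exact singleton_subset_iff.2 ⟨⟨subset_convexHull ℝ _ (center_mem_setAgg _),
      subset_convexHull ℝ _ (center_mem_setAgg _)⟩, subset_convexHull ℝ _ (center_mem_setAgg _)⟩
  rintro q ⟨⟨hq₁, hq₂⟩, hq₃⟩
  have tangent₁ : 3/4 ≤ 1/2 * q.1 + 1 * q.2 :=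
    convexHull_min setAgg_one_zero_subset
      (convex_halfSpace_ge (isLinearMap_lincomb _ _) _) hq₁
  have tangent₂ : 4 * q.1 + (-1) * q.2 ≤ 3/2 :=
    convexHull_min setAgg_zero_one_subset
      (convex_halfSpace_le (isLinearMap_lincomb _ _) _) hq₂
  have diagonal : -(3/2) * q.1 + (3/2) * q.2 = 0 :=
    convexHull_min (t := {p : ℝ × ℝ | -(3/2) * p.1 + (3/2) * p.2 = 0})
      (fun _ hp => (setAgg_one_neg_one.subset hp).2)
      (convex_hyperplane (isLinearMap_lincomb _ _) _) hq₃
  exact Prod.ext (by linarith) (by linarith)
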